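/- arXiv:0908.3628 — 3 statements merged into one kernel-verified Lean document; each statement's English description precedes it below -/
import Mathlib

section
/- In the nilCoxeter algebra of W_n, the elements C(t) = (1 + t u_{n-1})···(1 + t u_1)(1 + 2t u_0)(1 + t u_1)···(1 + t u_{n-1}) satisfy C(s) C(t) = C(t) C(s) for all commuting indeterminates s, t. -/
/-!
Write `hᵢ(a) = 1 + a uᵢ`, and `C₀(a) = h₀(2a)`, `C_{m+1}(a) = h_{m+1}(a) C_m(a) h_{m+1}(a)`, so that
`C(t) = C_{n-1}(t)`. Since `uᵢ² = 0`, `hᵢ(a) hᵢ(b) = hᵢ(a + b)` for central `a, b`; the braid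
relations give the Yang–Baxter equation `hᵢ(a) h_{i+1}(a+b) hᵢ(b) = h_{i+1}(b) hᵢ(a+b) h_{i+1}(a)`
for `i ≥ 1`, and the quartic relation makes `C₁(a)` and `C₁(b)` commute.
For the induction step, with `i = m + 1` and `h_{i+1}` commuting with `C_m`, Yang–Baxter rewrites
`C_{i+1}(a) C_{i+1}(b)` as `L(a,b) · Cᵢ(a) Cᵢ(b) · R(a,b)`, where the twists `L` and `R` are
four-factor words in `hᵢ, h_{i+1}` that Yang–Baxter again shows to be symmetric in `a, b`.
Only centrality of the parameters is used, so we work over the centre of `NCP n`, which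
contains `s` and `t`.
-/

open Equiv

attribute [local instance] Classical.propDecidable

noncomputable section

namespace Giambelli

/-- The simple reflection `s_i` of the (infinite) hyperoctahedral group, realized
inside `Equiv.Perm ℤ`: `s_0` is the sign change of the first entry, and `s_i`
(`i ≥ 1`) swaps the entries in positions `i` and `i+1`. -/
def wS (i : ℕ) : Equiv.Perm ℤ :=
  if i = 0 then Equiv.swap 1 (-1)
  else Equiv.swap (i : ℤ) ((i : ℤ) + 1) * Equiv.swap (-(i : ℤ)) (-((i : ℤ) + 1))

/-- `f` is a signed permutation: `f(-i) = -f(i)`. -/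
def IsOddPerm (f : Equiv.Perm ℤ) : Prop := ∀ i : ℤ, f (-i) = - f i

/-- `f` moves only entries of absolute value at most `n`. -/
def SuppLe (n : ℕ) (f : Equiv.Perm ℤ) : Prop := ∀ i : ℤ, (n : ℤ) < |i| → f i = i

/-- Membership in the hyperoctahedral group `W_n`. -/
def InWn (n : ℕ) (f : Equiv.Perm ℤ) : Prop := IsOddPerm f ∧ SuppLe n f

/-- Membership in `W_∞ = ∪_n W_n`. -/
def InWinf (f : Equiv.Perm ℤ) : Prop := IsOddPerm f ∧ ∃ n : ℕ, SuppLe n f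

/-- The Coxeter length: the least length of a word in the `s_i` representing `f`. -/
def len (f : Equiv.Perm ℤ) : ℕ :=
  sInf {m : ℕ | ∃ l : List ℕ, l.length = m ∧ (l.map wS).prod = f}

/-- `f` has a descent at position `p ≥ 0`, where by convention `w_0 = 0`. -/
def Descent (f : Equiv.Perm ℤ) (p : ℕ) : Prop :=
  f ((p : ℤ) + 1) < (if p = 0 then 0 else f (p : ℤ))

/-- `f` is increasing up to `k`: it has no descent at any position `< k`. -/
def IncUpTo (k : ℕ) (f : Equiv.Perm ℤ) : Prop := ∀ p : ℕ, p < k → ¬ Descent f p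

/-- `f` is `k`-Grassmannian: `ℓ(f s_i) = ℓ(f) + 1` for all `i ≠ k`. -/
def kGrass (k : ℕ) (f : Equiv.Perm ℤ) : Prop :=
  ∀ i : ℕ, i ≠ k → len (f * wS i) = len f + 1

/-- The reflection `t_{ij}`, swapping the entries in positions `i` and `j`. -/
def tt (i j : ℕ) : Equiv.Perm ℤ :=
  Equiv.swap (i : ℤ) (j : ℤ) * Equiv.swap (-(i : ℤ)) (-(j : ℤ))

/-- The reflection `t̄_{ij}`, swapping and negating the entries in positions `i`,`j`
    (negating the entry in position `i` when `i = j`). -/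
def tb (i j : ℕ) : Equiv.Perm ℤ :=
  if i = j then Equiv.swap (i : ℤ) (-(i : ℤ))
  else Equiv.swap (i : ℤ) (-(j : ℤ)) * Equiv.swap (j : ℤ) (-(i : ℤ))

/-- The transition set `Φ(w) = Φ₁(w) ∪ Φ₂(w)` attached to `w` with last descent `r`
and `s` maximal such that `w_s < w_r`. -/
def Phi (w : Equiv.Perm ℤ) (r s : ℕ) : Set (Equiv.Perm ℤ) :=
  {v | ∃ i : ℕ, 1 ≤ i ∧ i < r ∧ len (w * tt r s * tt i r) = len w ∧ v = w * tt r s * tt i r} ∪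
  {v | ∃ i : ℕ, 1 ≤ i ∧ len (w * tt r s * tb i r) = len w ∧ v = w * tt r s * tb i r}

/-- The last descent position of `f`. -/
def lastDescent (f : Equiv.Perm ℤ) : ℕ := sSup {p : ℕ | Descent f p}

/-- `max { i > r | w_i < w_r }`. -/
def maxS (f : Equiv.Perm ℤ) (r : ℕ) : ℕ := sSup {i : ℕ | r < i ∧ f (i : ℤ) < f (r : ℤ)}

/-- A terminal node of the `k`-transition tree: `w = 1` or the last descent of `w` is `k`. -/
def Terminal (k : ℕ) (w : Equiv.Perm ℤ) : Prop := w = 1 ∨ lastDescent w = k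

/-- The edge (parent-to-child) relation of the `k`-transition tree `T^k`. -/
def StepT (k : ℕ) (w v : Equiv.Perm ℤ) : Prop :=
  ¬ Terminal k w ∧ v ∈ Phi w (lastDescent w) (maxS w (lastDescent w))

/-- The defining relations of the nilCoxeter algebra of the hyperoctahedral group `W_n`. -/
inductive NCRel (n : ℕ) : FreeAlgebra ℤ (Fin n) → FreeAlgebra ℤ (Fin n) → Prop
  | sq (i : Fin n) : NCRel n (FreeAlgebra.ι ℤ i * FreeAlgebra.ι ℤ i) 0
  | comm (i j : Fin n) (h : i.val + 2 ≤ j.val) :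
      NCRel n (FreeAlgebra.ι ℤ i * FreeAlgebra.ι ℤ j) (FreeAlgebra.ι ℤ j * FreeAlgebra.ι ℤ i)
  | braid (i j : Fin n) (h1 : 1 ≤ i.val) (h2 : j.val = i.val + 1) :
      NCRel n (FreeAlgebra.ι ℤ i * FreeAlgebra.ι ℤ j * FreeAlgebra.ι ℤ i)
              (FreeAlgebra.ι ℤ j * FreeAlgebra.ι ℤ i * FreeAlgebra.ι ℤ j)
  | bzero (i j : Fin n) (h0 : i.val = 0) (h1 : j.val = 1) :
      NCRel n (FreeAlgebra.ι ℤ i * FreeAlgebra.ι ℤ j * FreeAlgebra.ι ℤ i * FreeAlgebra.ι ℤ j)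
              (FreeAlgebra.ι ℤ j * FreeAlgebra.ι ℤ i * FreeAlgebra.ι ℤ j * FreeAlgebra.ι ℤ i)

/-- The nilCoxeter algebra of `W_n`. -/
abbrev NC (n : ℕ) := RingQuot (NCRel n)

/-- The generator `u_i` of the nilCoxeter algebra (and `0` for `i ≥ n`). -/
def NCgen (n : ℕ) (i : ℕ) : NC n :=
  if h : i < n then RingQuot.mkAlgHom ℤ (NCRel n) (FreeAlgebra.ι ℤ (⟨i, h⟩ : Fin n)) else 0

/-- The hyperoctahedral group `W_n` as a type. -/
abbrev WnSub (n : ℕ) := {f : Equiv.Perm ℤ // InWn n f}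

/-- `l` is a reduced word for `f` (letters in `{0,...,n-1}`). -/
def ReducedWordN (n : ℕ) (f : Equiv.Perm ℤ) (l : List ℕ) : Prop :=
  (∀ a ∈ l, a < n) ∧ (l.map wS).prod = f ∧
    ∀ l' : List ℕ, (∀ a ∈ l', a < n) → (l'.map wS).prod = f → l.length ≤ l'.length

/-- `C(a) = (1+a u_{n-1})⋯(1+a u_1)(1+2a u_0)(1+a u_1)⋯(1+a u_{n-1})` with scalar `a`. -/
def Celt (n : ℕ) (a : ℤ) : NC n :=
  (((List.range (n - 1)).map fun j => 1 + algebraMap ℤ (NC n) a * NCgen n (n - 1 - j)).prod) *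
    (1 + algebraMap ℤ (NC n) (2 * a) * NCgen n 0) *
  (((List.range (n - 1)).map fun j => 1 + algebraMap ℤ (NC n) a * NCgen n (j + 1)).prod)

/-- `A_1(a) = (1+a u_{n-1})(1+a u_{n-2})⋯(1+a u_1)` with scalar `a`. -/
def A1elt (n : ℕ) (a : ℤ) : NC n :=
  ((List.range (n - 1)).map fun j => 1 + algebraMap ℤ (NC n) a * NCgen n (n - 1 - j)).prod

/-- Polynomials in two central indeterminates `s`, `t` over the nilCoxeter algebra. -/
abbrev NCP (n : ℕ) := Polynomial (Polynomial (NC n))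

/-- The generator `u_i` viewed in `NCP n`. -/
def NCPu (n : ℕ) (i : ℕ) : NCP n := Polynomial.C (Polynomial.C (NCgen n i))

/-- The indeterminate `t`. -/
def tvar (n : ℕ) : NCP n := Polynomial.X

/-- The indeterminate `s`. -/
def svar (n : ℕ) : NCP n := Polynomial.C Polynomial.X

/-- `C(t) = (1+t u_{n-1})⋯(1+t u_1)(1+2t u_0)(1+t u_1)⋯(1+t u_{n-1})`. -/
def Cop (n : ℕ) (t : NCP n) : NCP n :=
  (((List.range (n - 1)).map fun j => 1 + t * NCPu n (n - 1 - j)).prod) *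
    (1 + 2 * t * NCPu n 0) *
  (((List.range (n - 1)).map fun j => 1 + t * NCPu n (j + 1)).prod)

section TypeBFactors

variable {K R : Type*} [CommRing K] [Ring R] [Algebra K R]

structure IsTypeBNilCoxeter (u : ℕ → R) : Prop where
  sq (i : ℕ) : u i * u i = 0
  comm {i j : ℕ} : i + 2 ≤ j → Commute (u i) (u j)
  braid {i : ℕ} : 1 ≤ i → u i * u (i + 1) * u i = u (i + 1) * u i * u (i + 1)
  quartic : u 0 * u 1 * u 0 * u 1 = u 1 * u 0 * u 1 * u 0

def factor (u : ℕ → R) (i : ℕ) (a : K) : R := 1 + a • u i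

def typeBProd (u : ℕ → R) : ℕ → K → R
  | 0, a => factor u 0 (2 * a)
  | m + 1, a => factor u (m + 1) a * typeBProd u m a * factor u (m + 1) a

variable {u : ℕ → R} {i m : ℕ} {a b : K}

theorem IsTypeBNilCoxeter.map {S : Type*} [Ring S] (hu : IsTypeBNilCoxeter u) (f : R →+* S) :
    IsTypeBNilCoxeter (f ∘ u) where
  sq i := by rw [Function.comp_apply, ← map_mul, hu.sq, map_zero]
  comm hij := (hu.comm hij).map f
  braid hi := by simp only [Function.comp_apply, ← map_mul, hu.braid hi]
  quartic := by simp only [Function.comp_apply, ← map_mul, hu.quartic]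

theorem factor_zero : factor u i (0 : K) = 1 := by
  rw [factor, zero_smul, add_zero]

theorem factor_mul_factor (hsq : u i * u i = 0) :
    factor u i a * factor u i b = factor u i (a + b) := by
  simp only [factor, mul_add, add_mul, one_mul, mul_one, smul_mul_smul_comm, hsq, smul_zero,
    add_smul]
  abel

theorem factor_yangBaxter (hsq : ∀ j, u j * u j = 0)
    (hbraid : u i * u (i + 1) * u i = u (i + 1) * u i * u (i + 1)) :
    factor u i a * factor u (i + 1) (a + b) * factor u i b =
      factor u (i + 1) b * factor u i (a + b) * factor u (i + 1) a := by
  simp only [factor, mul_add, add_mul, one_mul, mul_one, smul_mul_assoc, mul_smul_comm, hsq,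
    hbraid, smul_zero, add_zero]
  module

theorem commute_factor {x : R} (hx : Commute x (u i)) (a : K) : Commute x (factor u i a) :=
  (Commute.one_right x).add_right (hx.smul_right a)

theorem commute_typeBProd {x : R} (hx : ∀ j ≤ m, Commute x (u j)) (a : K) :
    Commute x (typeBProd u m a) := by
  induction m with
  | zero => exact commute_factor (hx 0 le_rfl) _
  | succ m ih =>
    have hfac := commute_factor (hx (m + 1) le_rfl) a
    exact (hfac.mul_right (ih fun j hj => hx j (hj.trans m.le_succ))).mul_right hfac

def leftTwist (u : ℕ → R) (i : ℕ) (a b : K) : R :=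
  factor u (i + 1) a * factor u i a * factor u (i + 1) b * factor u i (-a)

def rightTwist (u : ℕ → R) (i : ℕ) (a b : K) : R :=
  factor u i (-b) * factor u (i + 1) a * factor u i b * factor u (i + 1) b

theorem leftTwist_comm (hsq : ∀ j, u j * u j = 0)
    (hbraid : u i * u (i + 1) * u i = u (i + 1) * u i * u (i + 1)) :
    leftTwist u i a b = leftTwist u i b a := by
  calc leftTwist u i a b
      = factor u (i + 1) b * (factor u (i + 1) (a - b) * factor u i (b + (a - b)) *
          factor u (i + 1) b) * factor u i (-a) := by
        rw [add_sub_cancel, leftTwist, ← mul_assoc, ← mul_assoc, factor_mul_factor (hsq _),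
          add_sub_cancel]
    _ = factor u (i + 1) b * (factor u i b * factor u (i + 1) (b + (a - b)) *
          factor u i (a - b)) * factor u i (-a) := by
        rw [factor_yangBaxter hsq hbraid]
    _ = leftTwist u i b a := by
        rw [add_sub_cancel, mul_assoc _ _ (factor u i (-a)), mul_assoc _ _ (factor u i (-a)),
          factor_mul_factor (hsq _), show a - b + -a = -b by abel, leftTwist]
        simp only [mul_assoc]

theorem rightTwist_comm (hsq : ∀ j, u j * u j = 0)
    (hbraid : u i * u (i + 1) * u i = u (i + 1) * u i * u (i + 1)) :
    rightTwist u i a b = rightTwist u i b a := by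
  calc rightTwist u i a b
      = factor u i (-b) * (factor u (i + 1) a * factor u i (b - a + a) *
          factor u (i + 1) (b - a)) * factor u (i + 1) a := by
        simp only [rightTwist, mul_assoc]
        rw [factor_mul_factor (hsq _), sub_add_cancel]
    _ = factor u i (-b) * (factor u i (b - a) * factor u (i + 1) (b - a + a) *
          factor u i a) * factor u (i + 1) a := by
        rw [factor_yangBaxter hsq hbraid]
    _ = rightTwist u i b a := by
        rw [sub_add_cancel, ← mul_assoc (factor u i (-b)), ← mul_assoc (factor u i (-b)),
          factor_mul_factor (hsq _), show -b + (b - a) = -a by abel, rightTwist]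

theorem factor_conj_mul_factor_conj (hsq : ∀ j, u j * u j = 0)
    (hbraid : u i * u (i + 1) * u i = u (i + 1) * u i * u (i + 1)) {x y : R}
    (hx : Commute x (u (i + 1))) (hy : Commute y (u (i + 1))) :
    factor u (i + 1) a * (factor u i a * x * factor u i a) * factor u (i + 1) a *
        (factor u (i + 1) b * (factor u i b * y * factor u i b) * factor u (i + 1) b) =
      leftTwist u i a b * (factor u i a * x * factor u i a * (factor u i b * y * factor u i b)) *
        rightTwist u i a b := by
  have hcombine (c d : K) (r : R) : factor u i c * (factor u i d * r) = factor u i (c + d) * r := by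
    rw [← mul_assoc, factor_mul_factor (hsq i)]
  calc _ = factor u (i + 1) a * factor u i a * x *
          (factor u i a * factor u (i + 1) (a + b) * factor u i b) * y * factor u i b *
            factor u (i + 1) b := by
        rw [← factor_mul_factor (hsq _)]
        simp only [mul_assoc]
    _ = factor u (i + 1) a * factor u i a * x *
          (factor u (i + 1) b * factor u i (a + b) * factor u (i + 1) a) * y * factor u i b *
            factor u (i + 1) b := by
        rw [factor_yangBaxter hsq hbraid]
    _ = factor u (i + 1) a * factor u i a * factor u (i + 1) b * x * factor u i (a + b) * y *
          factor u (i + 1) a * factor u i b * factor u (i + 1) b := by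
        simp only [mul_assoc]
        rw [(commute_factor hx b).left_comm, (commute_factor hy a).symm.left_comm]
    _ = _ := by
        simp only [leftTwist, rightTwist, mul_assoc, hcombine, neg_add_cancel, add_neg_cancel,
          factor_zero, one_mul]

theorem commute_factor_conj (hsq : ∀ j, u j * u j = 0)
    (hbraid : u i * u (i + 1) * u i = u (i + 1) * u i * u (i + 1)) {x y : R}
    (hx : Commute x (u (i + 1))) (hy : Commute y (u (i + 1)))
    (hxy : Commute (factor u i a * x * factor u i a) (factor u i b * y * factor u i b)) :
    Commute (factor u (i + 1) a * (factor u i a * x * factor u i a) * factor u (i + 1) a)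
      (factor u (i + 1) b * (factor u i b * y * factor u i b) * factor u (i + 1) b) := by
  rw [commute_iff_eq, factor_conj_mul_factor_conj hsq hbraid hx hy,
    factor_conj_mul_factor_conj hsq hbraid hy hx, leftTwist_comm hsq hbraid,
    rightTwist_comm hsq hbraid, hxy.eq]

theorem typeBProd_zero_commute (hsq : u 0 * u 0 = 0) :
    Commute (typeBProd u 0 a) (typeBProd u 0 b) := by
  rw [commute_iff_eq, typeBProd, typeBProd, factor_mul_factor hsq, factor_mul_factor hsq, add_comm]

theorem typeBProd_one_commute (hsq : ∀ j, u j * u j = 0)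
    (hquartic : u 0 * u 1 * u 0 * u 1 = u 1 * u 0 * u 1 * u 0) :
    Commute (typeBProd u 1 a) (typeBProd u 1 b) := by
  have hsq' (j : ℕ) (x : R) : u j * (u j * x) = 0 := by rw [← mul_assoc, hsq, zero_mul]
  have hquartic' (x : R) : u 1 * (u 0 * (u 1 * (u 0 * x))) = u 0 * (u 1 * (u 0 * (u 1 * x))) := by
    simp only [← mul_assoc, hquartic]
  have hquartic'' : u 1 * (u 0 * (u 1 * u 0)) = u 0 * (u 1 * (u 0 * u 1)) := by
    simp only [← mul_assoc, hquartic]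
  rw [commute_iff_eq]
  simp only [typeBProd, factor, zero_add, mul_add, add_mul, one_mul, mul_one, smul_mul_assoc,
    mul_smul_comm, mul_assoc, hsq, hsq', hquartic', hquartic'', mul_zero, smul_zero,
    add_zero]
  module

theorem typeBProd_commute (hu : IsTypeBNilCoxeter u) (a b : K) :
    ∀ m, Commute (typeBProd u m a) (typeBProd u m b)
  | 0 => typeBProd_zero_commute (hu.sq 0)
  | 1 => typeBProd_one_commute hu.sq hu.quartic
  | m + 2 =>
    have hC (c : K) : Commute (typeBProd u m c) (u (m + 2)) :=
      (commute_typeBProd (fun j hj => (hu.comm (by omega)).symm) c).symm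
    commute_factor_conj hu.sq (hu.braid (by omega)) (hC a) (hC b)
      (typeBProd_commute hu a b (m + 1))

theorem typeBProd_eq_prod (u : ℕ → R) (m : ℕ) (a : K) :
    typeBProd u m a = ((List.range m).map fun j => factor u (m - j) a).prod *
      factor u 0 (2 * a) * ((List.range m).map fun j => factor u (j + 1) a).prod := by
  induction m with
  | zero => simp only [typeBProd, List.range_zero, List.map_nil, List.prod_nil, one_mul, mul_one]
  | succ m ih =>
    have hdesc : ((List.range (m + 1)).map fun j => factor u (m + 1 - j) a).prod =
        factor u (m + 1) a * ((List.range m).map fun j => factor u (m - j) a).prod := by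
      simp only [List.range_succ_eq_map, List.map_cons, List.map_map, List.prod_cons,
        Function.comp_def, Nat.sub_zero, Nat.succ_sub_succ]
    have hasc : ((List.range (m + 1)).map fun j => factor u (j + 1) a).prod =
        ((List.range m).map fun j => factor u (j + 1) a).prod * factor u (m + 1) a := by
      simp only [List.range_succ, List.map_append, List.prod_append, List.map_cons, List.map_nil,
        List.prod_cons, List.prod_nil, mul_one]
    rw [typeBProd, ih, hdesc, hasc]
    simp only [mul_assoc]

end TypeBFactors

-- Instance search does not find the ring structure on `NCP n` through the two layers of
-- `Polynomial` over the `RingQuot` by itself.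
instance (n : ℕ) : Ring (Polynomial (NC n)) := inferInstance

instance (n : ℕ) : Ring (NCP n) := inferInstance

theorem NCgen_of_lt {n i : ℕ} (h : i < n) :
    NCgen n i = RingQuot.mkAlgHom ℤ (NCRel n) (FreeAlgebra.ι ℤ (⟨i, h⟩ : Fin n)) :=
  dif_pos h

theorem NCgen_of_le {n i : ℕ} (h : n ≤ i) : NCgen n i = 0 :=
  dif_neg h.not_gt

theorem isTypeBNilCoxeter_NCgen (n : ℕ) : IsTypeBNilCoxeter (NCgen n) where
  sq i := by
    rcases lt_or_ge i n with h | h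
    · rw [NCgen_of_lt h, ← map_mul, RingQuot.mkAlgHom_rel ℤ (NCRel.sq _), map_zero]
    · rw [NCgen_of_le h, mul_zero]
  comm {i j} hij := by
    rcases lt_or_ge j n with h | h
    · rw [commute_iff_eq, NCgen_of_lt h, NCgen_of_lt (by omega : i < n), ← map_mul, ← map_mul]
      exact RingQuot.mkAlgHom_rel ℤ (NCRel.comm _ _ hij)
    · rw [NCgen_of_le h]
      exact Commute.zero_right _
  braid {i} hi := by
    rcases lt_or_ge (i + 1) n with h | h
    · simp only [NCgen_of_lt h, NCgen_of_lt (by omega : i < n), ← map_mul]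
      exact RingQuot.mkAlgHom_rel ℤ (NCRel.braid _ _ hi rfl)
    · rw [NCgen_of_le h, mul_zero, zero_mul, mul_zero]
  quartic := by
    rcases lt_or_ge 1 n with h | h
    · simp only [NCgen_of_lt h, NCgen_of_lt (by omega : 0 < n), ← map_mul]
      exact RingQuot.mkAlgHom_rel ℤ (NCRel.bzero _ _ rfl rfl)
    · rw [NCgen_of_le h, mul_zero, zero_mul, mul_zero, zero_mul]

theorem isTypeBNilCoxeter_NCPu (n : ℕ) : IsTypeBNilCoxeter (NCPu n) :=
  (isTypeBNilCoxeter_NCgen n).map (Polynomial.C.comp Polynomial.C)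

theorem tvar_mem_center (n : ℕ) : tvar n ∈ Subring.center (NCP n) :=
  Subring.mem_center_iff.2 fun z => (Polynomial.commute_X z).eq.symm

theorem svar_mem_center (n : ℕ) : svar n ∈ Subring.center (NCP n) := by
  refine Subring.mem_center_iff.2 fun z => ?_
  ext k
  rw [svar, Polynomial.coeff_C_mul, Polynomial.coeff_mul_C, Polynomial.X_mul]

theorem Cop_eq_typeBProd (n : ℕ) {t : NCP n} (ht : t ∈ Subring.center (NCP n)) :
    Cop n t = typeBProd (NCPu n) (n - 1) (⟨t, ht⟩ : Subring.center (NCP n)) := by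
  rw [typeBProd_eq_prod]
  rfl

theorem Cop_commute (n : ℕ) :
    Cop n (svar n) * Cop n (tvar n) = Cop n (tvar n) * Cop n (svar n) := by
  rw [Cop_eq_typeBProd n (svar_mem_center n), Cop_eq_typeBProd n (tvar_mem_center n)]
  exact (typeBProd_commute (isTypeBNilCoxeter_NCPu n) _ _ _).eq

end Giambelli
end
end

section
/- The type A Stanley symmetric function G_ω(Y) = ⟨A_1(y_1)A_1(y_2)···, ω⟩ is a symmetric function in the variables Y = (y_1, y_2, ...); that is, for any number m of variables, ⟨A_1(y_1)···A_1(y_m), ω⟩ is a symmetric polynomial in y_1,...,y_m. -/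
open Equiv

attribute [local instance] Classical.propDecidable

noncomputable section

namespace Giambelli

/-!
Write `h_i(a) = 1 + a u_i`. The nilCoxeter relations give `h_i(a) h_i(b) = h_i(a + b)` and the
Yang–Baxter equation `h_i(a) h_{i+1}(a + b) h_i(b) = h_{i+1}(b) h_i(a + b) h_{i+1}(a)`.
So `A(y) = h_{k-1}(y) ⋯ h_0(y)` has inverse `h_0(-y) ⋯ h_{k-1}(-y)`, and the Yang–Baxter equation
moves `A(x)` past this inverse one factor at a time; hence `A(x)` and `A(y)` commute. The factors
`A_1(y_j)` therefore commute pairwise, and their product does not depend on their order.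
-/

section NilCoxeterA

variable {S R : Type*} [CommRing S] [Ring R] [Algebra S R]

structure IsNilCoxeterA (u : ℕ → R) : Prop where
  sq : ∀ i, u i * u i = 0
  commute : ∀ i j, i + 2 ≤ j → Commute (u i) (u j)
  braid : ∀ i, u i * u (i + 1) * u i = u (i + 1) * u i * u (i + 1)

variable (u : ℕ → R)

def hFactor (i : ℕ) (a : S) : R := 1 + a • u i

def descProd : ℕ → S → R
  | 0, _ => 1
  | k + 1, a => hFactor u k a * descProd k a

def ascProd : ℕ → S → R
  | 0, _ => 1
  | k + 1, a => ascProd k a * hFactor u k a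

variable {u}

theorem hFactor_zero (i : ℕ) : hFactor u i (0 : S) = 1 := by
  simp [hFactor]

theorem hFactor_mul {i : ℕ} (hi : u i * u i = 0) (a b : S) :
    hFactor u i a * hFactor u i b = hFactor u i (a + b) := by
  simp only [hFactor, mul_add, add_mul, mul_one, one_mul, smul_mul_assoc, mul_smul_comm, hi,
    smul_zero]
  module

theorem hFactor_yangBaxter (hu : IsNilCoxeterA u) (i : ℕ) (a b : S) :
    hFactor u i a * hFactor u (i + 1) (a + b) * hFactor u i b =
      hFactor u (i + 1) b * hFactor u i (a + b) * hFactor u (i + 1) a := by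
  simp only [hFactor, mul_add, add_mul, mul_one, one_mul, smul_mul_assoc, mul_smul_comm,
    hu.sq, smul_zero, hu.braid]
  module

theorem commute_hFactor {i j : ℕ} (h : Commute (u i) (u j)) (a b : S) :
    Commute (hFactor u i a) (hFactor u j b) :=
  (Commute.one_left _).add_left ((Commute.one_right _).add_right ((h.smul_left a).smul_right b))

theorem commute_hFactor_descProd (hc : ∀ i j, i + 2 ≤ j → Commute (u i) (u j)) {j k : ℕ}
    (hk : k + 1 ≤ j) (a b : S) : Commute (hFactor u j b) (descProd u k a) := by
  induction k with
  | zero => exact Commute.one_right _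
  | succ k ih => exact (commute_hFactor (hc k j hk) a b).symm.mul_right (ih (by omega))

theorem commute_hFactor_ascProd (hc : ∀ i j, i + 2 ≤ j → Commute (u i) (u j)) {j k : ℕ}
    (hk : k + 1 ≤ j) (a b : S) : Commute (hFactor u j b) (ascProd u k a) := by
  induction k with
  | zero => exact Commute.one_right _
  | succ k ih => exact (ih (by omega)).mul_right (commute_hFactor (hc k j hk) a b).symm

theorem descProd_mul_ascProd_neg (hsq : ∀ i, u i * u i = 0) (k : ℕ) (a : S) :
    descProd u k a * ascProd u k (-a) = 1 := by
  induction k with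
  | zero => exact mul_one 1
  | succ k ih =>
    rw [descProd, ascProd, mul_assoc, ← mul_assoc (descProd u k a), ih, one_mul,
      hFactor_mul (hsq k), add_neg_cancel, hFactor_zero]

theorem ascProd_neg_mul_descProd (hsq : ∀ i, u i * u i = 0) (k : ℕ) (a : S) :
    ascProd u k (-a) * descProd u k a = 1 := by
  induction k with
  | zero => exact mul_one 1
  | succ k ih =>
    rw [descProd, ascProd, mul_assoc, ← mul_assoc (hFactor u k (-a)), hFactor_mul (hsq k),
      neg_add_cancel, hFactor_zero, one_mul, ih]

theorem ascProd_neg_mul_hFactor_mul_descProd (hu : IsNilCoxeterA u) (x y : S) (k : ℕ) :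
    ascProd u k (-y) * hFactor u k (x - y) * descProd u k x =
      descProd u (k + 1) x * ascProd u (k + 1) (-y) := by
  induction k with
  | zero =>
    simp only [ascProd, descProd, one_mul, mul_one]
    rw [hFactor_mul (hu.sq 0), sub_eq_add_neg]
  | succ k ih =>
    have ybe := hFactor_yangBaxter hu k (-y) x
    rw [neg_add_eq_sub] at ybe
    have hL := commute_hFactor_ascProd hu.commute (le_refl (k + 1)) (-y) x
    have hA := commute_hFactor_descProd hu.commute (le_refl (k + 1)) x (-y)
    calc ascProd u (k + 1) (-y) * hFactor u (k + 1) (x - y) * descProd u (k + 1) x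
        = ascProd u k (-y) * (hFactor u k (-y) * hFactor u (k + 1) (x - y) * hFactor u k x) *
            descProd u k x := by simp only [ascProd, descProd, mul_assoc]
      _ = ascProd u k (-y) * hFactor u (k + 1) x * hFactor u k (x - y) *
            (hFactor u (k + 1) (-y) * descProd u k x) := by rw [ybe]; simp only [mul_assoc]
      _ = hFactor u (k + 1) x * (ascProd u k (-y) * hFactor u k (x - y) * descProd u k x) *
            hFactor u (k + 1) (-y) := by rw [← hL.eq, hA.eq]; simp only [mul_assoc]
      _ = descProd u (k + 2) x * ascProd u (k + 2) (-y) := by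
            rw [ih]; simp only [descProd, ascProd, mul_assoc]

theorem commute_ascProd_neg_descProd (hu : IsNilCoxeterA u) (x y : S) (k : ℕ) :
    Commute (ascProd u k (-y)) (descProd u k x) := by
  cases k with
  | zero => exact Commute.one_left _
  | succ k =>
    rw [Commute, SemiconjBy, ← ascProd_neg_mul_hFactor_mul_descProd hu, descProd, ascProd,
      mul_assoc, ← mul_assoc (hFactor u k (-y)), hFactor_mul (hu.sq k), neg_add_eq_sub,
      ← mul_assoc]

theorem commute_descProd (hu : IsNilCoxeterA u) (k : ℕ) (x y : S) :
    Commute (descProd u k x) (descProd u k y) := by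
  let A : Rˣ := ⟨descProd u k y, ascProd u k (-y), descProd_mul_ascProd_neg hu.sq k y,
    ascProd_neg_mul_descProd hu.sq k y⟩
  exact (Commute.units_inv_left_iff (u := A)).mp (commute_ascProd_neg_descProd hu x y k) |>.symm

theorem prod_map_range_hFactor_sub (a : S) (N : ℕ) :
    ((List.range N).map fun j => hFactor u (N - j) a).prod =
      descProd (fun i => u (i + 1)) N a := by
  induction N with
  | zero => rfl
  | succ N ih =>
    rw [List.range_succ_eq_map, List.map_cons, List.map_map, List.prod_cons, descProd, ← ih]
    simp only [Function.comp_def, Nat.sub_zero, Nat.succ_sub_succ]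
    rfl

end NilCoxeterA

lemma NCgen_sq (n i : ℕ) : NCgen n i * NCgen n i = 0 := by
  by_cases h : i < n
  · simp only [NCgen, dif_pos h, ← map_mul]
    exact (RingQuot.mkAlgHom_rel ℤ (NCRel.sq ⟨i, h⟩)).trans (map_zero _)
  · simp [NCgen, h]

lemma NCgen_commute {n i j : ℕ} (h : i + 2 ≤ j) : Commute (NCgen n i) (NCgen n j) := by
  by_cases hj : j < n
  · have hi : i < n := by omega
    simp only [NCgen, dif_pos hi, dif_pos hj]
    rw [Commute, SemiconjBy, ← map_mul, ← map_mul]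
    exact RingQuot.mkAlgHom_rel ℤ (NCRel.comm ⟨i, hi⟩ ⟨j, hj⟩ h)
  · simp only [NCgen, dif_neg hj]
    exact Commute.zero_right _

lemma NCgen_braid {n i : ℕ} (h1 : 1 ≤ i) :
    NCgen n i * NCgen n (i + 1) * NCgen n i = NCgen n (i + 1) * NCgen n i * NCgen n (i + 1) := by
  by_cases h2 : i + 1 < n
  · have hi : i < n := by omega
    simp only [NCgen, dif_pos hi, dif_pos h2, ← map_mul]
    exact RingQuot.mkAlgHom_rel ℤ (NCRel.braid ⟨i, hi⟩ ⟨i + 1, h2⟩ h1 rfl)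
  · simp [NCgen, h2]

-- The shift skips `u_0`, whose relation with `u_1` is the type B one.
theorem isNilCoxeterA_NCgen_succ (n : ℕ) : IsNilCoxeterA fun i => NCgen n (i + 1) where
  sq i := NCgen_sq n (i + 1)
  commute i j h := NCgen_commute (by omega)
  braid i := NCgen_braid (Nat.le_add_left 1 i)

theorem A1elt_eq_descProd (n : ℕ) (a : ℤ) :
    A1elt n a = descProd (fun i => NCgen n (i + 1)) (n - 1) a := by
  simp only [A1elt, ← Algebra.smul_def]
  exact prod_map_range_hFactor_sub a (n - 1)

theorem commute_A1elt (n : ℕ) (a b : ℤ) : Commute (A1elt n a) (A1elt n b) := by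
  rw [A1elt_eq_descProd, A1elt_eq_descProd]
  exact commute_descProd (isNilCoxeterA_NCgen_succ n) (n - 1) a b

theorem stanleyA_symmetric_general (n : ℕ)
    (B : Module.Basis (WnSub n) ℤ (NC n))
    (ω : WnSub n)
    (m : ℕ) (x : Fin m → ℤ) (τ : Equiv.Perm (Fin m)) :
    B.repr ((List.ofFn fun i => A1elt n (x i)).prod) ω =
      B.repr ((List.ofFn fun i => A1elt n (x (τ i))).prod) ω := by
  have hperm := τ.ofFn_comp_perm fun i => A1elt n (x i)
  have hcomm := List.pairwise_ofFn.mpr fun i j _ => commute_A1elt n (x (τ i)) (x (τ j))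
  exact congrArg (fun a => B.repr a ω) (hperm.prod_eq' hcomm).symm

theorem stanleyA_symmetric (n : ℕ)
    (U : WnSub n → NC n) (B : Module.Basis (WnSub n) ℤ (NC n))
    (hU : ∀ (w : WnSub n) (l : List ℕ), ReducedWordN n w.1 l →
      (l.map (NCgen n)).prod = U w)
    (hB : ∀ w : WnSub n, B w = U w)
    (ω : WnSub n) (hω : ∀ i : ℤ, 0 < i → 0 < ω.1 i)
    (m : ℕ) (x : Fin m → ℤ) (τ : Equiv.Perm (Fin m)) :
    B.repr ((List.ofFn fun i => A1elt n (x i)).prod) ω =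
      B.repr ((List.ofFn fun i => A1elt n (x (τ i))).prod) ω :=
  stanleyA_symmetric_general n B ω m x τ

end Giambelli
end
end

section
/- For w ∈ W_∞ increasing up to k and not k-Grassmannian, with last descent r > k and s maximal such that w_s < w_r, the set Φ(w) = Φ_1(w) ∪ Φ_2(w) is nonempty, where Φ_1(w) = {w t_{rs} t_{ir} : 1 ≤ i < r, ℓ(w t_{rs} t_{ir}) = ℓ(w)} and Φ_2(w) = {w t_{rs} t̄_{ir} : i ≥ 1, ℓ(w t_{rs} t̄_{ir}) = ℓ(w)}. -/
open Equiv

attribute [local instance] Classical.propDecidable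

noncomputable section

namespace Giambelli

/-!
The Coxeter length on `W_∞` is the type B inversion count `invCount`: right multiplication by a
simple reflection moves exactly one inversion pair, up to the symmetry `(a, b) ~ (-b, -a)`. Since `w` increases after
its last descent `r` and `w_h < w_s` for `r < h < s`, the reflection `t_{rs}` is a covering step,
so `v = w t_{rs}` has length `ℓ(w) - 1`, and it suffices to find a reflection `t = t_{ir}`
(`i < r`) or `t = t̄_{ir}` with `ℓ(v t) = ℓ(v) + 1`. If some `v_i < v_r` with `i < r`, take the
largest such `v_i` and `t_{ir}`; otherwise take `t̄_{rr}` if `v_r > 0`, and if `v_r < 0` take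
`t̄_{ir}` where `v_i` is the least value above `|v_r|` at a positive position (it exists because
`v` fixes all large positions). Each of these covering statements is proved by induction on the
positions, conjugating the reflection by a simple reflection `s_p` until it becomes one.
-/

variable {p q : ℕ}

lemma wS_of_ne_zero (hp : p ≠ 0) :
    wS p = swap (p : ℤ) (p + 1) * swap (-(p : ℤ)) (-(p + 1)) := if_neg hp

lemma tb_of_ne (hpq : p ≠ q) : tb p q = swap (p : ℤ) (-q) * swap (q : ℤ) (-p) := if_neg hpq

lemma tb_self : tb p p = swap (p : ℤ) (-p) := if_pos rfl

lemma wS_apply_self (hp : p ≠ 0) : wS p p = p + 1 := by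
  simp only [wS_of_ne_zero hp, Perm.mul_apply, swap_apply_def]
  split_ifs <;> omega

lemma wS_apply_add_one (hp : p ≠ 0) : wS p (p + 1) = p := by
  simp only [wS_of_ne_zero hp, Perm.mul_apply, swap_apply_def]
  split_ifs <;> omega

lemma wS_apply_of_ne (hp : p ≠ 0) {x : ℤ} (h₁ : x ≠ p) (h₂ : x ≠ p + 1) (h₃ : x ≠ -p)
    (h₄ : x ≠ -(p + 1)) : wS p x = x := by
  simp only [wS_of_ne_zero hp, Perm.mul_apply, swap_apply_def]
  split_ifs <;> omega

lemma wS_zero_apply_one : wS 0 1 = -1 := by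
  simp [wS]

lemma wS_zero_apply_of_ne {x : ℤ} (h₁ : x ≠ 1) (h₂ : x ≠ -1) : wS 0 x = x :=
  swap_apply_of_ne_of_ne h₁ h₂

lemma tt_apply_left (hp : p ≠ 0) : tt p q p = q := by
  simp only [tt, Perm.mul_apply, swap_apply_def]
  split_ifs <;> omega

lemma tt_apply_right (hq : q ≠ 0) : tt p q q = p := by
  simp only [tt, Perm.mul_apply, swap_apply_def]
  split_ifs <;> omega

lemma tt_apply_of_ne {x : ℤ} (h₁ : x ≠ p) (h₂ : x ≠ q) (h₃ : x ≠ -p) (h₄ : x ≠ -q) :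
    tt p q x = x := by
  simp only [tt, Perm.mul_apply, swap_apply_def]
  split_ifs <;> omega

lemma tt_mul_self (hp : p ≠ 0) (hq : q ≠ 0) : tt p q * tt p q = 1 := by
  ext x
  simp only [tt, Perm.mul_apply, swap_apply_def, Perm.one_apply]
  split_ifs <;> omega

lemma tb_apply_left (hp : p ≠ 0) (hpq : p ≠ q) : tb p q p = -q := by
  rw [tb_of_ne hpq, Perm.mul_apply, swap_apply_def, swap_apply_def]
  split_ifs <;> omega

lemma tb_apply_of_ne {x : ℤ} (h₁ : x ≠ p) (h₂ : x ≠ q) (h₃ : x ≠ -p) (h₄ : x ≠ -q) :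
    tb p q x = x := by
  rcases eq_or_ne p q with rfl | hpq
  · rw [tb_self, swap_apply_of_ne_of_ne h₁ h₃]
  · rw [tb_of_ne hpq, Perm.mul_apply, swap_apply_of_ne_of_ne h₂ h₃,
      swap_apply_of_ne_of_ne h₁ h₄]

lemma tb_self_apply_self : tb p p p = -p := by
  rw [tb_self, swap_apply_left]

lemma tb_comm (hp : p ≠ 0) (hq : q ≠ 0) : tb p q = tb q p := by
  rcases eq_or_ne p q with rfl | hpq
  · rfl
  · rw [tb_of_ne hpq, tb_of_ne hpq.symm]
    ext x
    simp only [Perm.mul_apply, swap_apply_def]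
    split_ifs <;> omega

lemma wS_apply_neg (p : ℕ) (x : ℤ) : wS p (-x) = -wS p x := by
  unfold wS
  split_ifs
  · simp only [swap_apply_def]
    split_ifs <;> omega
  · simp only [Perm.mul_apply, swap_apply_def]
    split_ifs <;> omega

lemma wS_mul_self (p : ℕ) : wS p * wS p = 1 := by
  ext x
  unfold wS
  split_ifs
  · simp
  · simp only [Perm.mul_apply, swap_apply_def, Perm.one_apply]
    split_ifs <;> omega

lemma conj_swap {σ : Perm ℤ} (hσ : σ * σ = 1) (a b : ℤ) : σ * swap a b * σ = swap (σ a) (σ b) := by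
  rw [swap_apply_apply, ← eq_inv_of_mul_eq_one_left hσ]

lemma conj_swap_mul_swap {σ : Perm ℤ} (hσ : σ * σ = 1) (a b c d : ℤ) :
    σ * (swap a b * swap c d) * σ = swap (σ a) (σ b) * swap (σ c) (σ d) := by
  rw [← conj_swap hσ, ← conj_swap hσ]
  simp only [mul_assoc]
  rw [← mul_assoc σ σ, hσ, one_mul]

lemma tt_self_eq_wS (hp : p ≠ 0) : tt p (p + 1) = wS p := by
  rw [tt, wS_of_ne_zero hp]
  push_cast
  rfl

lemma tb_one_one_eq_wS_zero : tb 1 1 = wS 0 := by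
  simp [tb, wS]

lemma tt_eq_conj_wS (hp : p ≠ 0) (hpq : p + 1 < q) : tt p q = wS p * tt (p + 1) q * wS p := by
  rw [tt, tt, conj_swap_mul_swap (wS_mul_self p), wS_apply_neg, wS_apply_neg]
  push_cast
  rw [wS_apply_add_one hp, wS_apply_of_ne hp (x := q) (by omega) (by omega) (by omega) (by omega)]

lemma tb_self_eq_conj_wS (hp : p ≠ 0) : tb (p + 1) (p + 1) = wS p * tb p p * wS p := by
  rw [tb_self, tb_self, conj_swap (wS_mul_self p), wS_apply_neg, wS_apply_self hp]
  push_cast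
  rfl

lemma tb_eq_conj_wS (hp : p ≠ 0) (hpq : p + 1 < q) : tb (p + 1) q = wS p * tb p q * wS p := by
  rw [tb_of_ne (show p + 1 ≠ q by omega), tb_of_ne (show p ≠ q by omega),
    conj_swap_mul_swap (wS_mul_self p), wS_apply_neg, wS_apply_neg, wS_apply_self hp,
    wS_apply_of_ne hp (x := q) (by omega) (by omega) (by omega) (by omega)]
  push_cast
  rfl

lemma tb_one_eq_conj_wS_zero (hq : 1 < q) : tb 1 q = wS 0 * tt 1 q * wS 0 := by
  rw [tt, conj_swap_mul_swap (wS_mul_self 0), wS_apply_neg, wS_apply_neg, tb_of_ne (by omega),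
    Nat.cast_one, wS_zero_apply_one, wS_zero_apply_of_ne (by omega) (by omega), neg_neg]
  ext x
  simp only [Perm.mul_apply, swap_apply_def]
  split_ifs <;> first | omega | contradiction

lemma IsOddPerm.mul {f g : Perm ℤ} (hf : IsOddPerm f) (hg : IsOddPerm g) : IsOddPerm (f * g) :=
  fun i => by rw [Perm.mul_apply, Perm.mul_apply, hg, hf]

lemma IsOddPerm.map_zero {f : Perm ℤ} (hf : IsOddPerm f) : f 0 = 0 := by
  have := hf 0
  rw [neg_zero] at this
  omega

lemma IsOddPerm.map_ne_zero {f : Perm ℤ} (hf : IsOddPerm f) {x : ℤ} (hx : x ≠ 0) : f x ≠ 0 :=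
  fun h => hx (f.injective (h.trans hf.map_zero.symm))

lemma SuppLe.mono {f : Perm ℤ} {n m : ℕ} (hnm : n ≤ m) (hf : SuppLe n f) : SuppLe m f :=
  fun i hi => hf i (lt_of_le_of_lt (by exact_mod_cast hnm) hi)

lemma SuppLe.mul {f g : Perm ℤ} {n : ℕ} (hf : SuppLe n f) (hg : SuppLe n g) :
    SuppLe n (f * g) :=
  fun i hi => by rw [Perm.mul_apply, hg i hi, hf i hi]

lemma InWinf.mul {f g : Perm ℤ} (hf : InWinf f) (hg : InWinf g) : InWinf (f * g) := by
  obtain ⟨hfo, n, hfn⟩ := hf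
  obtain ⟨hgo, m, hgm⟩ := hg
  exact ⟨hfo.mul hgo, max n m, (hfn.mono (le_max_left n m)).mul (hgm.mono (le_max_right n m))⟩

lemma inWinf_one : InWinf 1 :=
  ⟨fun _ => rfl, 0, fun _ _ => rfl⟩

lemma inWinf_wS (p : ℕ) : InWinf (wS p) := by
  refine ⟨wS_apply_neg p, p + 1, fun x hx => ?_⟩
  unfold wS
  push_cast at hx
  rcases abs_cases x with ⟨hx', -⟩ | ⟨hx', -⟩ <;> split_ifs <;>
    simp only [Perm.mul_apply, swap_apply_def] <;> split_ifs <;> omega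

lemma inWinf_tt (hp : p ≠ 0) (hq : q ≠ 0) : InWinf (tt p q) := by
  refine ⟨fun x => ?_, p + q, fun x hx => ?_⟩
  · simp only [tt, Perm.mul_apply, swap_apply_def]
    split_ifs <;> omega
  · push_cast at hx
    simp only [tt, Perm.mul_apply, swap_apply_def]
    rcases abs_cases x with ⟨hx', -⟩ | ⟨hx', -⟩ <;> split_ifs <;> omega

lemma inWinf_tb (hp : p ≠ 0) (hq : q ≠ 0) : InWinf (tb p q) := by
  refine ⟨fun x => ?_, p + q, fun x hx => ?_⟩
  · rcases eq_or_ne p q with rfl | hpq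
    · simp only [tb_self, swap_apply_def]
      split_ifs <;> omega
    · simp only [tb_of_ne hpq, Perm.mul_apply, swap_apply_def]
      split_ifs <;> omega
  · push_cast at hx
    rcases eq_or_ne p q with rfl | hpq
    · simp only [tb_self, swap_apply_def]
      rcases abs_cases x with ⟨hx', -⟩ | ⟨hx', -⟩ <;> split_ifs <;> omega
    · simp only [tb_of_ne hpq, Perm.mul_apply, swap_apply_def]
      rcases abs_cases x with ⟨hx', -⟩ | ⟨hx', -⟩ <;> split_ifs <;> omega

/-- Pairs `(i, j)` with `0 < j`, `-j ≤ i < j`, `i ≠ 0` and `w j < w i`: for `0 < i` these are the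
ordinary inversions, for `i = -j` the negative entries `w j < 0`, and for `i < 0` the pairs
`|i| < j` with `w |i| + w j < 0`. -/
def invSet (w : Perm ℤ) : Set (ℤ × ℤ) :=
  {x | 0 < x.2 ∧ -x.2 ≤ x.1 ∧ x.1 < x.2 ∧ x.1 ≠ 0 ∧ w x.2 < w x.1}

def invCount (w : Perm ℤ) : ℕ := (invSet w).ncard

lemma SuppLe.abs_apply_le {w : Perm ℤ} {n : ℕ} (hw : SuppLe n w) {x : ℤ} (hx : |x| ≤ n) :
    |w x| ≤ n := by
  by_contra! h
  rw [w.injective (hw (w x) h)] at h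
  omega

lemma invSet_finite {w : Perm ℤ} (hW : InWinf w) : (invSet w).Finite := by
  obtain ⟨-, n, hn⟩ := hW
  refine (Set.finite_Icc ((-(n : ℤ), -(n : ℤ))) ((n : ℤ), (n : ℤ))).subset ?_
  rintro ⟨i, j⟩ ⟨hj, hij, hij', -, hinv : w j < w i⟩
  have hjn : j ≤ n := by
    by_contra! h
    have hwj : w j = j := hn j (by rw [abs_of_pos hj]; omega)
    rcases le_or_gt |i| n with hi | hi
    · have := (abs_le.mp (hn.abs_apply_le hi)).2
      omega
    · have := hn i hi
      omega
  simp only [Set.mem_Icc, Prod.le_def]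
  omega

lemma invCount_one : invCount 1 = 0 := by
  rw [invCount, Set.ncard_eq_zero (invSet_finite inWinf_one)]
  ext ⟨i, j⟩
  simp only [invSet, Perm.one_apply, Set.mem_empty_iff_false, iff_false]
  rintro ⟨-, -, h, -, h'⟩
  omega

/-- The representative of the pair `{a, b}` modulo `{a, b} ~ {-b, -a}` used in `invSet`. -/
def pairRep (x : ℤ × ℤ) : ℤ × ℤ :=
  if 0 < x.1 + x.2 ∨ (x.1 + x.2 = 0 ∧ 0 < x.2) then x else (-x.2, -x.1)

lemma pairRep_mem_invSet {u : Perm ℤ} (hu : IsOddPerm u) {a b : ℤ} (ha : a ≠ 0) (hb : b ≠ 0)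
    (hab : a < b) (hinv : u b < u a) : pairRep (a, b) ∈ invSet u := by
  unfold pairRep
  split_ifs with h
  · exact ⟨by simp only; omega, by simp only; omega, hab, ha, hinv⟩
  · refine ⟨by simp only; omega, by simp only; omega, by simp only; omega, by simp only; omega, ?_⟩
    simp only
    rw [hu, hu]
    omega

lemma pairRep_of_mem_invSet {w : Perm ℤ} {i j : ℤ} (h : (i, j) ∈ invSet w) :
    pairRep (i, j) = (i, j) ∧ pairRep (-j, -i) = (i, j) := by
  obtain ⟨hj, hij, -⟩ := h
  constructor
  · exact if_pos (by simp only; omega)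
  · unfold pairRep
    split_ifs with h'
    · simp only [Prod.mk.injEq] at h' ⊢
      omega
    · simp only [neg_neg]

lemma pairRep_eq_or (x : ℤ × ℤ) : pairRep x = x ∨ pairRep x = (-x.2, -x.1) := by
  unfold pairRep
  split_ifs
  · exact Or.inl rfl
  · exact Or.inr rfl

section Flip

variable {τ : Perm ℤ} (hτ : IsOddPerm τ) (hττ : τ * τ = 1)
include hτ hττ

lemma pairRep_map_pairRep_map {u : Perm ℤ} {x : ℤ × ℤ} (hx : x ∈ invSet u) :
    pairRep (τ (pairRep (τ x.1, τ x.2)).1, τ (pairRep (τ x.1, τ x.2)).2) = x := by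
  have hinv (z : ℤ) : τ (τ z) = z := by rw [← Perm.mul_apply, hττ, Perm.one_apply]
  obtain ⟨i, j⟩ := x
  rcases pairRep_eq_or (τ i, τ j) with h | h <;> rw [h]
  · rw [hinv, hinv]
    exact (pairRep_of_mem_invSet hx).1
  · rw [hτ, hτ, hinv, hinv]
    exact (pairRep_of_mem_invSet hx).2

variable {a b : ℤ}
  (hord : ∀ x y : ℤ, x ≠ 0 → y ≠ 0 → x < y → (x, y) ≠ (a, b) → (x, y) ≠ (-b, -a) → τ x < τ y)
  (hflip : τ b < τ a)
include hord hflip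

lemma pairRep_map_mem_invSet_diff {u : Perm ℤ} (hu : IsOddPerm u) (hab : -b ≤ a) {x : ℤ × ℤ}
    (hx : x ∈ invSet u \ {(a, b)}) :
    pairRep (τ x.1, τ x.2) ∈ invSet (u * τ) \ {(a, b)} := by
  have hinv (z : ℤ) : τ (τ z) = z := by rw [← Perm.mul_apply, hττ, Perm.one_apply]
  obtain ⟨i, j⟩ := x
  obtain ⟨⟨hj, hij, hij', hi, hu'⟩, hne⟩ := hx
  simp only [Set.mem_singleton_iff, Prod.mk.injEq] at hne
  have hτij : τ i < τ j :=
    hord i j hi (by omega) hij' (fun h => hne (by simpa using h))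
      (by simp only [ne_eq, Prod.mk.injEq]; omega)
  refine ⟨pairRep_mem_invSet (hu.mul hτ) (hτ.map_ne_zero hi) (hτ.map_ne_zero (by omega)) hτij
    (by simpa only [Perm.mul_apply, hinv] using hu'), fun h => ?_⟩
  rcases pairRep_eq_or (τ i, τ j) with h' | h' <;>
    rw [h', Set.mem_singleton_iff, Prod.mk.injEq] at h
  · rw [← h.1, ← h.2, hinv, hinv] at hflip
    omega
  · rw [← h.1, ← h.2, hτ, hτ, hinv, hinv] at hflip
    omega

lemma invCount_mul_of_flip {w : Perm ℤ} (hW : InWinf w) (hτW : InWinf τ)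
    (hin : (a, b) ∈ invSet (w * τ)) (hout : (a, b) ∉ invSet w) :
    invCount (w * τ) = invCount w + 1 := by
  have hab : -b ≤ a := hin.2.1
  have hwττ : w * τ * τ = w := by rw [mul_assoc, hττ, mul_one]
  set G : ℤ × ℤ → ℤ × ℤ := fun x => pairRep (τ x.1, τ x.2)
  have hbij : Set.BijOn G (invSet w \ {(a, b)}) (invSet (w * τ) \ {(a, b)}) := by
    refine ⟨fun x hx => pairRep_map_mem_invSet_diff hτ hττ hord hflip hW.1 hab hx,
      fun x hx y hy hxy => ?_, fun y hy => ⟨G y, ?_, pairRep_map_pairRep_map hτ hττ hy.1⟩⟩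
    · rw [← pairRep_map_pairRep_map hτ hττ hx.1, ← pairRep_map_pairRep_map hτ hττ hy.1]
      exact congrArg (fun z => pairRep (τ z.1, τ z.2)) hxy
    · simpa only [hwττ] using
        pairRep_map_mem_invSet_diff hτ hττ hord hflip (hW.mul hτW).1 hab hy
  rw [invCount, invCount, ← Set.ncard_sdiff_singleton_add_one hin (invSet_finite (hW.mul hτW)),
    ← hbij.image_eq, hbij.injOn.ncard_image, Set.sdiff_singleton_eq_self hout]

end Flip

lemma descent_iff (hp : p ≠ 0) {f : Perm ℤ} : Descent f p ↔ f (p + 1) < f p := by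
  rw [Descent, if_neg hp]

lemma descent_zero_iff {f : Perm ℤ} : Descent f 0 ↔ f 1 < 0 := by
  simp [Descent]

lemma not_descent_iff {f : Perm ℤ} (hf : IsOddPerm f) :
    ¬ Descent f p ↔ (if p = 0 then 0 else f p) < f (p + 1) := by
  have hne : f (p + 1) ≠ if p = 0 then 0 else f p := by
    split_ifs with hp
    · exact hf.map_ne_zero (by omega)
    · exact fun h => by have := f.injective h; omega
  rw [Descent, not_lt]
  exact ⟨fun h => lt_of_le_of_ne h hne.symm, le_of_lt⟩

lemma strictMonoOn_of_not_descent {w : Perm ℤ} (hw : IsOddPerm w) {r : ℕ}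
    (h : ∀ p, r < p → ¬ Descent w p) : StrictMonoOn (fun n : ℕ => w n) (Set.Ioi r) := by
  refine strictMonoOn_of_lt_add_one Set.ordConnected_Ioi fun a _ ha _ => ?_
  have := (not_descent_iff hw).mp (h a ha)
  rw [if_neg (by simp at ha; omega)] at this
  simpa using this

lemma invCount_mul_wS_of_not_descent {w : Perm ℤ} (hW : InWinf w) (h : ¬ Descent w p) :
    invCount (w * wS p) = invCount w + 1 := by
  rw [not_descent_iff hW.1] at h
  rcases eq_or_ne p 0 with rfl | hp
  · simp only [if_true, Nat.cast_zero, zero_add] at h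
    refine invCount_mul_of_flip (a := -1) (b := 1) (wS_apply_neg 0) (wS_mul_self 0) ?_ ?_ hW
      (inWinf_wS 0) ?_ ?_
    · intro x y _ _ hxy h₁ h₂
      simp only [ne_eq, Prod.mk.injEq] at h₁ h₂
      simp only [wS, if_true, swap_apply_def]
      split_ifs <;> omega
    · simp only [wS, if_true, swap_apply_left, swap_apply_right]
      norm_num
    · refine ⟨by norm_num, le_refl _, by norm_num, by norm_num, ?_⟩
      simp only [Perm.mul_apply, wS_apply_neg, wS_zero_apply_one, neg_neg]
      rw [hW.1]
      omega
    · rintro ⟨-, -, -, -, h' : w 1 < w (-1)⟩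
      rw [hW.1] at h'
      omega
  · rw [if_neg hp] at h
    refine invCount_mul_of_flip (a := p) (b := p + 1) (wS_apply_neg p) (wS_mul_self p) ?_ ?_ hW
      (inWinf_wS p) ?_ ?_
    · intro x y _ _ hxy h₁ h₂
      simp only [ne_eq, Prod.mk.injEq] at h₁ h₂
      simp only [wS_of_ne_zero hp, Perm.mul_apply, swap_apply_def]
      split_ifs <;> omega
    · simp only [wS_apply_self hp, wS_apply_add_one hp]
      omega
    · refine ⟨by simp only; omega, by simp only; omega, by simp only; omega, by simp only; omega,
        ?_⟩
      simpa only [Perm.mul_apply, wS_apply_self hp, wS_apply_add_one hp] using h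
    · rintro ⟨-, -, -, -, h' : w (p + 1) < w p⟩
      omega

lemma invCount_mul_wS_of_descent {w : Perm ℤ} (hW : InWinf w) (h : Descent w p) :
    invCount w = invCount (w * wS p) + 1 := by
  have h' : ¬ Descent (w * wS p) p := by
    rcases eq_or_ne p 0 with rfl | hp
    · rw [descent_zero_iff] at h ⊢
      simp only [Perm.mul_apply, wS_zero_apply_one]
      rw [hW.1]
      omega
    · rw [descent_iff hp] at h ⊢
      simp only [Perm.mul_apply, wS_apply_self hp, wS_apply_add_one hp]
      omega
  simpa only [mul_assoc, wS_mul_self, mul_one] using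
    invCount_mul_wS_of_not_descent (hW.mul (inWinf_wS p)) h'

lemma invCount_mul_wS_le {w : Perm ℤ} (hW : InWinf w) (p : ℕ) :
    invCount (w * wS p) ≤ invCount w + 1 := by
  by_cases h : Descent w p
  · have := invCount_mul_wS_of_descent hW h
    omega
  · exact (invCount_mul_wS_of_not_descent hW h).le

lemma eq_one_of_forall_not_descent {w : Perm ℤ} (hW : InWinf w) (h : ∀ p, ¬ Descent w p) :
    w = 1 := by
  obtain ⟨hodd, N, hN⟩ := hW
  have hstep (n : ℕ) : w (n + 1) < w (n + 1 + 1) := by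
    simpa using (not_descent_iff hodd (p := n + 1)).mp (h _)
  have hup (n : ℕ) : (n : ℤ) + 1 ≤ w (n + 1) := by
    induction n with
    | zero =>
      have := (not_descent_iff hodd (p := 0)).mp (h 0)
      simp only [if_true, Nat.cast_zero, zero_add] at this ⊢
      omega
    | succ n ih =>
      have := hstep n
      push_cast
      omega
  have hdown (d n : ℕ) (hd : N ≤ n + d) : w (n + 1) ≤ (n : ℤ) + 1 := by
    induction d generalizing n with
    | zero => exact (hN _ (by rw [abs_of_pos (by omega)]; omega)).le
    | succ d ih =>
      have := ih (n + 1) (by omega)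
      have := hstep n
      push_cast at *
      omega
  have hpos (n : ℕ) : w (n + 1) = (n : ℤ) + 1 := le_antisymm (hdown N n (by omega)) (hup n)
  ext x
  rcases lt_trichotomy x 0 with hx | rfl | hx
  · obtain ⟨n, rfl⟩ : ∃ n : ℕ, x = -((n : ℤ) + 1) := ⟨(-x - 1).toNat, by omega⟩
    rw [hodd, hpos, Perm.one_apply]
  · rw [hodd.map_zero, Perm.one_apply]
  · obtain ⟨n, rfl⟩ : ∃ n : ℕ, x = (n : ℤ) + 1 := ⟨(x - 1).toNat, by omega⟩
    rw [hpos, Perm.one_apply]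

lemma exists_word_length_invCount {w : Perm ℤ} (hW : InWinf w) :
    ∃ l : List ℕ, l.length = invCount w ∧ (l.map wS).prod = w := by
  induction hn : invCount w using Nat.strong_induction_on generalizing w with
  | _ n ih =>
    by_cases hd : ∀ p, ¬ Descent w p
    · obtain rfl := eq_one_of_forall_not_descent hW hd
      rw [invCount_one] at hn
      exact ⟨[], hn, rfl⟩
    · obtain ⟨p, hp⟩ := not_forall_not.mp hd
      have hcount := invCount_mul_wS_of_descent hW hp
      obtain ⟨l, hl, hprod⟩ := ih _ (by omega) (hW.mul (inWinf_wS p)) rfl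
      refine ⟨l ++ [p], by simp [hl]; omega, ?_⟩
      simp [hprod, mul_assoc, wS_mul_self]

lemma inWinf_prod_wS (l : List ℕ) : InWinf (l.map wS).prod := by
  induction l with
  | nil => exact inWinf_one
  | cons p l ih => simpa using (inWinf_wS p).mul ih

lemma invCount_prod_le (l : List ℕ) : invCount (l.map wS).prod ≤ l.length := by
  induction l using List.reverseRecOn with
  | nil => simp [invCount_one]
  | append_singleton l p ih =>
    have := invCount_mul_wS_le (inWinf_prod_wS l) p
    simp only [List.map_append, List.prod_append, List.map_singleton, List.prod_singleton,
      List.length_append, List.length_singleton]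
    omega

lemma len_eq_invCount {w : Perm ℤ} (hW : InWinf w) : len w = invCount w := by
  obtain ⟨l, hl, hprod⟩ := exists_word_length_invCount hW
  refine le_antisymm (Nat.sInf_le ⟨l, hl, hprod⟩) (le_csInf ⟨_, l, hl, hprod⟩ ?_)
  rintro m ⟨l', rfl, rfl⟩
  exact invCount_prod_le l'

lemma invCount_mul_conj_wS {w τ : Perm ℤ} (hW : InWinf w) (hτ : InWinf τ) (p : ℕ)
    (hcov : invCount (w * wS p * τ) = invCount (w * wS p) + 1)
    (hflip : Descent w p ↔ ¬ Descent (w * wS p * τ) p) :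
    invCount (w * (wS p * τ * wS p)) = invCount w + 1 := by
  have hW' : InWinf (w * wS p * τ) := (hW.mul (inWinf_wS p)).mul hτ
  rw [← mul_assoc, ← mul_assoc]
  by_cases hd : Descent w p
  · have h₁ := invCount_mul_wS_of_descent hW hd
    have h₂ := invCount_mul_wS_of_not_descent hW' (hflip.mp hd)
    omega
  · have h₁ := invCount_mul_wS_of_not_descent hW hd
    have h₂ := invCount_mul_wS_of_descent hW' (not_not.mp (mt hflip.mpr hd))
    omega

lemma invCount_mul_tt_of_cover {w : Perm ℤ} (hW : InWinf w) (hp : p ≠ 0) (hpq : p < q)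
    (hlt : w p < w q) (hgap : ∀ h : ℕ, p < h → h < q → ¬ (w p < w h ∧ w h < w q)) :
    invCount (w * tt p q) = invCount w + 1 := by
  induction hd : q - p generalizing w p with
  | zero => omega
  | succ d ih =>
    rcases eq_or_lt_of_le (Nat.succ_le_of_lt hpq) with rfl | hpq'
    · rw [tt_self_eq_wS hp]
      refine invCount_mul_wS_of_not_descent hW ?_
      rw [descent_iff hp]
      push_cast at hlt
      omega
    have hx (h : ℕ) (h₁ : h ≠ p) (h₂ : h ≠ p + 1) : (w * wS p) h = w h := by
      rw [Perm.mul_apply, wS_apply_of_ne hp (by omega) (by omega) (by omega) (by omega)]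
    have hxp : (w * wS p) ((p + 1 : ℕ) : ℤ) = w p := by
      rw [Perm.mul_apply, Nat.cast_succ, wS_apply_add_one hp]
    rw [tt_eq_conj_wS hp hpq']
    refine invCount_mul_conj_wS hW (inWinf_tt (by omega) (by omega)) p ?_ ?_
    · refine ih (hW.mul (inWinf_wS p)) (by omega) hpq' ?_ (fun h h₁ h₂ => ?_) (by omega)
      · rwa [hxp, hx q (by omega) (by omega)]
      · rw [hxp, hx q (by omega) (by omega), hx h (by omega) (by omega)]
        exact hgap h (by omega) h₂
    · have hq : (w * wS p * tt (p + 1) q) (p + 1) = w q := by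
        rw [Perm.mul_apply, ← Nat.cast_succ, tt_apply_left (by omega), hx q (by omega) (by omega)]
      have hp' : (w * wS p * tt (p + 1) q) p = w (p + 1) := by
        rw [Perm.mul_apply, tt_apply_of_ne (by push_cast; omega) (by omega) (by push_cast; omega)
          (by omega), Perm.mul_apply, wS_apply_self hp]
      have hne₁ : w (p + 1) ≠ w p := fun h => by have := w.injective h; omega
      have hne₂ : w (p + 1) ≠ w q := fun h => by have := w.injective h; omega
      have := hgap (p + 1) (by omega) hpq'
      push_cast at this
      rw [descent_iff hp, descent_iff hp, hq, hp']
      omega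

lemma invCount_mul_tb_self_of_cover {w : Perm ℤ} (hW : InWinf w) (hp : p ≠ 0) (hpos : 0 < w p)
    (hgap : ∀ h : ℕ, 0 < h → h < p → ¬ (-w p < w h ∧ w h < w p)) :
    invCount (w * tb p p) = invCount w + 1 := by
  induction p generalizing w with
  | zero => omega
  | succ t ih =>
    rcases eq_or_ne t 0 with rfl | ht
    · rw [zero_add, tb_one_one_eq_wS_zero]
      refine invCount_mul_wS_of_not_descent hW ?_
      rw [descent_zero_iff]
      simpa using hpos.le
    have hx (h : ℕ) (h₁ : h ≠ t) (h₂ : h ≠ t + 1) : (w * wS t) h = w h := by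
      rw [Perm.mul_apply, wS_apply_of_ne ht (by omega) (by omega) (by omega) (by omega)]
    have hxt : (w * wS t) t = w (t + 1) := by
      rw [Perm.mul_apply, wS_apply_self ht]
    push_cast at hpos hgap ⊢
    rw [tb_self_eq_conj_wS ht]
    refine invCount_mul_conj_wS hW (inWinf_tb ht ht) t ?_ ?_
    · refine ih (hW.mul (inWinf_wS t)) ht (by rwa [hxt]) fun h h₁ h₂ => ?_
      rw [hxt, hx h (by omega) (by omega)]
      exact hgap h h₁ (by omega)
    · have ht' : (w * wS t * tb t t) t = -w (t + 1) := by
        rw [Perm.mul_apply, tb_self_apply_self, (hW.mul (inWinf_wS t)).1, hxt]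
      have ht₁ : (w * wS t * tb t t) (t + 1) = w t := by
        rw [Perm.mul_apply, tb_apply_of_ne (by omega) (by omega) (by omega) (by omega),
          Perm.mul_apply, wS_apply_add_one ht]
      have hne₁ : w t ≠ w (t + 1) := fun h => by have := w.injective h; omega
      have hne₂ : w t ≠ -w (t + 1) := fun h => by
        rw [← hW.1] at h
        have := w.injective h
        omega
      have := hgap t (by omega) (by omega)
      rw [descent_iff ht, descent_iff ht, ht', ht₁]
      omega

lemma invCount_mul_tb_one_of_cover {w : Perm ℤ} (hW : InWinf w) (hq : 1 < q)
    (hsign : w 1 < 0 ↔ 0 < w q) (hsum : 0 < w 1 + w q)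
    (hgap : ∀ h : ℕ, 1 < h → h < q → ¬ (-w 1 < w h ∧ w h < w q)) :
    invCount (w * tb 1 q) = invCount w + 1 := by
  have hwq : w q ≠ 0 := hW.1.map_ne_zero (by omega)
  have hx (h : ℕ) (h₁ : h ≠ 1) : (w * wS 0) h = w h := by
    rw [Perm.mul_apply, wS_zero_apply_of_ne (by omega) (by omega)]
  have hx₁ : (w * wS 0) 1 = -w 1 := by
    rw [Perm.mul_apply, wS_zero_apply_one, hW.1]
  rw [tb_one_eq_conj_wS_zero hq]
  refine invCount_mul_conj_wS hW (inWinf_tt (by omega) (by omega)) 0 ?_ ?_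
  · refine invCount_mul_tt_of_cover (hW.mul (inWinf_wS 0)) one_ne_zero hq ?_ fun h h₁ h₂ => ?_
    · rw [Nat.cast_one, hx₁, hx q (by omega)]
      omega
    · rw [Nat.cast_one, hx₁, hx q (by omega), hx h (by omega)]
      exact hgap h h₁ h₂
  · have h₁ : tt 1 q 1 = q := by simpa using tt_apply_left (p := 1) (q := q) one_ne_zero
    rw [descent_zero_iff, descent_zero_iff, Perm.mul_apply, h₁, hx q (by omega)]
    omega

lemma invCount_mul_tb_of_cover {w : Perm ℤ} (hW : InWinf w) (hp : p ≠ 0) (hpq : p < q)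
    (hsign : w p < 0 ↔ 0 < w q) (hsum : 0 < w p + w q)
    (hgap : ∀ h : ℕ, 0 < h → h < q → h ≠ p → ¬ (-w p < w h ∧ w h < w q))
    (hgap' : ∀ h : ℕ, 0 < h → h < p → ¬ (-w q < w h ∧ w h < w p)) :
    invCount (w * tb p q) = invCount w + 1 := by
  induction p generalizing w with
  | zero => omega
  | succ t ih =>
    rcases eq_or_ne t 0 with rfl | ht
    · rw [zero_add] at hpq hsign hsum hgap ⊢
      simp only [Nat.cast_one] at hsign hsum hgap
      exact invCount_mul_tb_one_of_cover hW hpq hsign hsum fun h h₁ h₂ =>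
        hgap h (by omega) h₂ (by omega)
    have hx (h : ℕ) (h₁ : h ≠ t) (h₂ : h ≠ t + 1) : (w * wS t) h = w h := by
      rw [Perm.mul_apply, wS_apply_of_ne ht (by omega) (by omega) (by omega) (by omega)]
    have hxt : (w * wS t) t = w (t + 1) := by
      rw [Perm.mul_apply, wS_apply_self ht]
    have hxt₁ : (w * wS t) (t + 1) = w t := by
      rw [Perm.mul_apply, wS_apply_add_one ht]
    have hxq := hx q (by omega) (by omega)
    push_cast at hsign hsum hgap hgap' ⊢
    rw [tb_eq_conj_wS ht hpq]
    refine invCount_mul_conj_wS hW (inWinf_tb ht (by omega)) t ?_ ?_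
    · refine ih (hW.mul (inWinf_wS t)) ht (by omega) (by rwa [hxt, hxq]) (by rwa [hxt, hxq])
        (fun h h₁ h₂ h₃ => ?_) (fun h h₁ h₂ => ?_)
      · rw [hxt, hxq]
        rcases eq_or_ne h (t + 1) with rfl | h₄
        · rw [Nat.cast_succ, hxt₁]
          exact hgap t (by omega) (by omega) (by omega)
        · rw [hx h h₃ h₄]
          exact hgap h h₁ h₂ (by omega)
      · rw [hxt, hxq, hx h (by omega) (by omega)]
        exact hgap' h h₁ (by omega)
    · have ht' : (w * wS t * tb t q) t = -w q := by
        rw [Perm.mul_apply, tb_apply_left ht (by omega), (hW.mul (inWinf_wS t)).1, hxq]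
      have ht₁ : (w * wS t * tb t q) (t + 1) = w t := by
        rw [Perm.mul_apply, tb_apply_of_ne (by omega) (by omega) (by omega) (by omega), hxt₁]
      have hne₁ : w t ≠ w (t + 1) := fun h => by have := w.injective h; omega
      have hne₂ : w t ≠ -w q := fun h => by
        rw [← hW.1] at h
        have := w.injective h
        omega
      have := hgap' t (by omega) (by omega)
      rw [descent_iff ht, descent_iff ht, ht', ht₁]
      omega

lemma exists_tt_cover_of_lt {v : Perm ℤ} (hV : InWinf v) {r : ℕ}
    (h : ∃ i : ℕ, 0 < i ∧ i < r ∧ v i < v r) :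
    ∃ i, 1 ≤ i ∧ i < r ∧ invCount (v * tt i r) = invCount v + 1 := by
  set F := (Finset.Ico 1 r).filter fun i : ℕ => v i < v r
  have hF (i : ℕ) : i ∈ F ↔ (1 ≤ i ∧ i < r) ∧ v i < v r := by
    rw [Finset.mem_filter, Finset.mem_Ico]
  obtain ⟨i, hi, hir, hlt⟩ := h
  obtain ⟨j, hjF, hjmax⟩ := F.exists_max_image (fun i : ℕ => v i) ⟨i, (hF i).2 ⟨⟨hi, hir⟩, hlt⟩⟩
  obtain ⟨⟨hj, hjr⟩, hjlt⟩ := (hF j).1 hjF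
  refine ⟨j, hj, hjr, invCount_mul_tt_of_cover hV (by omega) hjr hjlt fun h h₁ h₂ hh => ?_⟩
  have := hjmax h ((hF h).2 ⟨⟨by omega, h₂⟩, hh.2⟩)
  omega

lemma exists_tb_cover_of_neg {v : Perm ℤ} (hV : InWinf v) {r : ℕ} (hr : r ≠ 0) (hneg : v r < 0)
    (hgt : ∀ h : ℕ, 0 < h → h < r → v r < v h) :
    ∃ i, 1 ≤ i ∧ invCount (v * tb i r) = invCount v + 1 := by
  obtain ⟨n, hn⟩ := hV.2
  set c := -v r
  have hne : ∃ m : ℤ, c < m ∧ ∃ i : ℕ, 0 < i ∧ v i = m := by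
    refine ⟨n + c.toNat + 1, by omega, n + c.toNat + 1, by omega, ?_⟩
    push_cast
    exact hn _ (by rw [abs_of_pos (by omega)]; omega)
  obtain ⟨m, ⟨hcm, i, hi, rfl⟩, hmin⟩ :=
    Int.exists_least_of_bdd ⟨c, fun z (hz : c < z ∧ _) => hz.1.le⟩ hne
  have hmin' (h : ℕ) (h₁ : 0 < h) (h₂ : c < v h) : v i ≤ v h := hmin _ ⟨h₂, h, h₁, rfl⟩
  refine ⟨i, hi, ?_⟩
  rcases lt_trichotomy i r with hir | rfl | hri
  · refine invCount_mul_tb_of_cover hV (by omega) hir (by omega) (by omega)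
      (fun h h₁ h₂ _ => ?_) (fun h h₁ h₂ hh => ?_)
    · have := hgt h h₁ h₂
      omega
    · have := hmin' h h₁ (by omega)
      omega
  · omega
  · rw [tb_comm (by omega) hr]
    refine invCount_mul_tb_of_cover hV hr hri (by omega) (by omega)
      (fun h h₁ h₂ _ hh => ?_) (fun h h₁ h₂ => ?_)
    · have := hmin' h h₁ (by omega)
      omega
    · have := hgt h h₁ h₂
      omega

lemma exists_reflection_cover {v : Perm ℤ} (hV : InWinf v) {r : ℕ} (hr : r ≠ 0) :
    (∃ i, 1 ≤ i ∧ i < r ∧ invCount (v * tt i r) = invCount v + 1) ∨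
      ∃ i, 1 ≤ i ∧ invCount (v * tb i r) = invCount v + 1 := by
  by_cases h : ∃ i : ℕ, 0 < i ∧ i < r ∧ v i < v r
  · exact Or.inl (exists_tt_cover_of_lt hV h)
  right
  have hgt (i : ℕ) (hi : 0 < i) (hir : i < r) : v r < v i := by
    have hne : v r ≠ v i := fun h => by have := v.injective h; omega
    exact lt_of_le_of_ne (not_lt.mp fun h' => h ⟨i, hi, hir, h'⟩) hne
  rcases lt_or_gt_of_ne (hV.1.map_ne_zero (x := r) (by omega)) with hneg | hpos
  · exact exists_tb_cover_of_neg hV hr hneg hgt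
  · refine ⟨r, by omega, invCount_mul_tb_self_of_cover hV hr hpos fun h h₁ h₂ hh => ?_⟩
    have := hgt h h₁ h₂
    omega

lemma invCount_eq_mul_tt_add_one {w : Perm ℤ} (hW : InWinf w) {r s : ℕ} (hr : r ≠ 0)
    (hrlast : ∀ p, r < p → ¬ Descent w p) (hrs : r < s) (hsr : w s < w r) :
    invCount w = invCount (w * tt r s) + 1 := by
  have hv (h : ℕ) (h₁ : h ≠ r) (h₂ : h ≠ s) : (w * tt r s) h = w h := by
    rw [Perm.mul_apply, tt_apply_of_ne (by omega) (by omega) (by omega) (by omega)]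
  have hvr : (w * tt r s) r = w s := by rw [Perm.mul_apply, tt_apply_left hr]
  have hvs : (w * tt r s) s = w r := by rw [Perm.mul_apply, tt_apply_right (by omega)]
  conv_lhs => rw [← mul_one w, ← tt_mul_self hr (show s ≠ 0 by omega), ← mul_assoc]
  refine invCount_mul_tt_of_cover (hW.mul (inWinf_tt hr (by omega))) hr hrs (by rwa [hvr, hvs])
    fun h h₁ h₂ => ?_
  rw [hvr, hvs, hv h (by omega) (by omega)]
  have : w h < w s := strictMonoOn_of_not_descent hW.1 hrlast h₁ hrs h₂
  omega

theorem transition_set_nonempty_general (k : ℕ) (w : Equiv.Perm ℤ) (hW : InWinf w) (r s : ℕ)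
    (hrlast : ∀ p : ℕ, r < p → ¬ Descent w p) (hrk : k < r)
    (hs1 : r < s) (hs2 : w (s : ℤ) < w (r : ℤ)) :
    (Phi w r s).Nonempty := by
  have hr : r ≠ 0 := by omega
  have hV : InWinf (w * tt r s) := hW.mul (inWinf_tt hr (by omega))
  have hdown := invCount_eq_mul_tt_add_one hW hr hrlast hs1 hs2
  have hlen {u : Perm ℤ} (hu : InWinf u)
      (h : invCount (w * tt r s * u) = invCount (w * tt r s) + 1) :
      len (w * tt r s * u) = len w := by
    rw [len_eq_invCount (hV.mul hu), len_eq_invCount hW]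
    omega
  rcases exists_reflection_cover hV hr with ⟨i, hi, hir, h⟩ | ⟨i, hi, h⟩
  · exact ⟨_, Or.inl ⟨i, hi, hir, hlen (inWinf_tt (by omega) hr) h, rfl⟩⟩
  · exact ⟨_, Or.inr ⟨i, hi, hlen (inWinf_tb (by omega) hr) h, rfl⟩⟩

theorem transition_set_nonempty (k : ℕ) (w : Equiv.Perm ℤ) (hW : InWinf w)
    (hinc : IncUpTo k w) (hng : ¬ kGrass k w) (r s : ℕ)
    (hrd : Descent w r) (hrlast : ∀ p : ℕ, r < p → ¬ Descent w p) (hrk : k < r)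
    (hs1 : r < s) (hs2 : w (s : ℤ) < w (r : ℤ))
    (hs3 : ∀ j : ℕ, s < j → ¬ (w (j : ℤ) < w (r : ℤ))) :
    (Phi w r s).Nonempty :=
  transition_set_nonempty_general k w hW r s hrlast hrk hs1 hs2

end Giambelli
end
end
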